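/- Let A be a finite nonempty set, w : A → ℝ weights with w(a) ≥ 0 for all a and Σ_a w(a) = 1, f, g : A → ℝ with f(a) ≤ g(a) for all a, and τ ∈ (0,1). If m_f is the τ-expectile of f under w and m_g is the τ-expectile of g under w, then m_f ≤ m_g. -/
import Mathlib


open Finset

/-- `m` is the `τ`-expectile of the values `f` under the weights `w`. -/
def IsExpectile {A : Type*} [Fintype A] (τ : ℝ) (w f : A → ℝ) (m : ℝ) : Prop :=
  τ * ∑ a, w a * max (f a - m) 0 = (1 - τ) * ∑ a, w a * max (m - f a) 0

lemma expectile_key (τ : ℝ) (hτ : τ ∈ Set.Ioo (0 : ℝ) 1) (x y : ℝ) (hxy : x ≤ y) :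
    τ * max x 0 - (1 - τ) * max (-x) 0 + min τ (1 - τ) * (y - x)
      ≤ τ * max y 0 - (1 - τ) * max (-y) 0 := by
  obtain ⟨h0, h1⟩ := hτ
  rcases le_total x 0 with hx | hx <;> rcases le_total y 0 with hy | hy <;>
    rcases min_cases τ (1 - τ) with ⟨hm, _⟩ | ⟨hm, _⟩ <;>
    simp [max_eq_left, max_eq_right, hx, hy, neg_nonneg.2, neg_nonpos.2, hm] <;>
    nlinarith

/-- The `τ`-expectile is monotone in the values: if `f ≤ g` pointwise,
then the `τ`-expectile of `f` under `w` is at most that of `g` under `w`. -/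
theorem finite_expectile_mono_in_values
    {A : Type*} [Fintype A] [Nonempty A]
    (w : A → ℝ) (hw : ∀ a, 0 ≤ w a) (hsum : ∑ a, w a = 1)
    (f g : A → ℝ) (hfg : ∀ a, f a ≤ g a) (τ : ℝ) (hτ : τ ∈ Set.Ioo (0 : ℝ) 1)
    (mf mg : ℝ) (hmf : IsExpectile τ w f mf) (hmg : IsExpectile τ w g mg) :
    mf ≤ mg := by
  by_contra hlt
  push_neg at hlt
  obtain ⟨h0, h1⟩ := hτ
  set c : ℝ := min τ (1 - τ) with hc
  have hcpos : 0 < c := lt_min h0 (by linarith)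
  -- the "score" function
  set h : ℝ → ℝ := fun x => τ * max x 0 - (1 - τ) * max (-x) 0 with hh
  have hEf : ∑ a, w a * h (f a - mf) = 0 := by
    have := hmf
    unfold IsExpectile at this
    simp only [hh]
    simp_rw [neg_sub, mul_sub, Finset.sum_sub_distrib]
    rw [Finset.sum_congr rfl (fun a _ => by ring :
      ∀ a ∈ Finset.univ, w a * (τ * max (f a - mf) 0) = τ * (w a * max (f a - mf) 0))]
    rw [Finset.sum_congr rfl (fun a _ => by ring :
      ∀ a ∈ Finset.univ, w a * ((1 - τ) * max (mf - f a) 0)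
        = (1 - τ) * (w a * max (mf - f a) 0))]
    rw [← Finset.mul_sum, ← Finset.mul_sum, this]
    ring
  have hEg : ∑ a, w a * h (g a - mg) = 0 := by
    have := hmg
    unfold IsExpectile at this
    simp only [hh]
    simp_rw [neg_sub, mul_sub, Finset.sum_sub_distrib]
    rw [Finset.sum_congr rfl (fun a _ => by ring :
      ∀ a ∈ Finset.univ, w a * (τ * max (g a - mg) 0) = τ * (w a * max (g a - mg) 0))]
    rw [Finset.sum_congr rfl (fun a _ => by ring :
      ∀ a ∈ Finset.univ, w a * ((1 - τ) * max (mg - g a) 0)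
        = (1 - τ) * (w a * max (mg - g a) 0))]
    rw [← Finset.mul_sum, ← Finset.mul_sum, this]
    ring
  -- pointwise: h (f a - mf) ≤ h (g a - mf) ≤ h (g a - mg) - c * (mf - mg)
  have hpt : ∀ a, h (f a - mf) + c * (mf - mg) ≤ h (g a - mg) := by
    intro a
    have h1' : h (f a - mf) ≤ h (g a - mf) := by
      have hk := expectile_key τ ⟨h0, h1⟩ (f a - mf) (g a - mf) (by linarith [hfg a])
      have hcnn : 0 ≤ min τ (1 - τ) * (g a - mf - (f a - mf)) :=
        mul_nonneg hcpos.le (by linarith [hfg a])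
      simp only [hh]
      linarith
    have h2' : h (g a - mf) + c * (mf - mg) ≤ h (g a - mg) := by
      have hk := expectile_key τ ⟨h0, h1⟩ (g a - mf) (g a - mg) (by linarith)
      have heq : min τ (1 - τ) * (g a - mg - (g a - mf)) = c * (mf - mg) := by
        rw [hc]; ring
      rw [heq] at hk
      simp only [hh]
      linarith
    linarith
  -- sum it up with weights
  have hsum' : ∑ a, w a * (h (f a - mf) + c * (mf - mg)) ≤ ∑ a, w a * h (g a - mg) :=
    Finset.sum_le_sum fun a _ => mul_le_mul_of_nonneg_left (hpt a) (hw a)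
  have hexpand : ∑ a, w a * (h (f a - mf) + c * (mf - mg))
      = (∑ a, w a * h (f a - mf)) + c * (mf - mg) * ∑ a, w a := by
    rw [Finset.mul_sum]
    rw [← Finset.sum_add_distrib]
    exact Finset.sum_congr rfl fun a _ => by ring
  rw [hexpand, hEf, hEg, hsum] at hsum'
  nlinarith [hcpos, hlt]
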